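/- Let n ≥ 2 and let a_1, …, a_n be positive integers with a_1 > 1. Then φ_1 φ_2 + ∏_{j=1}^{ℓ_2 − 1} y_j = C_2^{−1} · (𝓛_2 𝓛_1 + 1) in K; that is, F_2 = C_2^{−1} · N[𝓛_1, 𝓛_2]. -/

import Mathlib

open MvPolynomial Finset

/-- The ambient field `K = ℚ(y_1, y_2, …)` (only `y_1,…,y_d` are used). -/
abbrev Kf : Type := FractionRing (MvPolynomial ℕ ℚ)

/-- The variable `y_j`, viewed in the fraction field. -/
noncomputable def y (j : ℕ) : Kf := algebraMap (MvPolynomial ℕ ℚ) Kf (X j)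

/-- Partial sums `ℓ_i = a_1 + ⋯ + a_i`, with `ℓ_0 = 0`. -/
def ell (a : ℕ → ℕ) (i : ℕ) : ℕ := ∑ s ∈ Finset.Icc 1 i, a s

/-- `φ_i`. -/
noncomputable def phi (a : ℕ → ℕ) (i : ℕ) : Kf :=
  if Odd i then
    ∑ k ∈ Finset.Icc (ell a (i-1)) (ell a i - 1), ∏ j ∈ Finset.Icc (ell a (i-1) + 1) k, y j
  else
    ∑ k ∈ Finset.Icc (ell a (i-1) + 1) (ell a i), ∏ j ∈ Finset.Icc k (ell a i - 1), y j

/-- `C_i`. -/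
noncomputable def Cc (a : ℕ → ℕ) (i : ℕ) : Kf :=
  if Odd i then ∏ j ∈ Finset.Icc 1 (ell a (i-1)), y j
  else ∏ j ∈ Finset.Icc 1 (ell a i - 1), (y j)⁻¹

/-- `𝓛_i = φ_i C_i`. -/
noncomputable def Lr (a : ℕ → ℕ) (i : ℕ) : Kf := phi a i * Cc a i

/-- The continuant `N[b_1,…,b_m]`. -/
def contN {R : Type*} [CommSemiring R] (b : ℕ → R) : ℕ → R
  | 0 => 1
  | 1 => b 1
  | (m+2) => b (m+2) * contN b (m+1) + contN b m

/-- The F-polynomials `F_m = F(𝒢[a_1,…,a_m])`. -/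
noncomputable def F (a : ℕ → ℕ) : ℕ → Kf
  | 0 => 1
  | 1 => phi a 1
  | 2 => phi a 1 * phi a 2 + ∏ j ∈ Finset.Icc 1 (ell a 2 - 1), y j
  | (m+3) =>
    if Odd (m+3) then
      y (ell a (m+2)) * phi a (m+3) * F a (m+2) + F a (m+1)
    else
      phi a (m+3) * F a (m+2) + (∏ j ∈ Finset.Icc (ell a (m+1)) (ell a (m+3) - 1), y j) * F a (m+1)

theorem y_ne_zero (j : ℕ) : y j ≠ 0 :=
  (map_ne_zero_iff _ (IsFractionRing.injective (MvPolynomial ℕ ℚ) Kf)).mpr (X_ne_zero j)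

theorem Cc_one (a : ℕ → ℕ) : Cc a 1 = 1 := by
  simp [Cc, ell]

theorem Cc_two (a : ℕ → ℕ) : Cc a 2 = (∏ j ∈ Icc 1 (ell a 2 - 1), y j)⁻¹ := by
  simp [Cc, prod_inv_distrib]

theorem contN_two {R : Type*} [CommSemiring R] (b : ℕ → R) : contN b 2 = b 2 * b 1 + 1 := by
  simp [contN]

theorem F_two (a : ℕ → ℕ) :
    F a 2 = phi a 1 * phi a 2 + ∏ j ∈ Icc 1 (ell a 2 - 1), y j := by
  rw [F]

theorem F_two_eq_continuant_general
    (a : ℕ → ℕ) :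
    phi a 1 * phi a 2 + (∏ j ∈ Finset.Icc 1 (ell a 2 - 1), y j)
      = (Cc a 2)⁻¹ * (Lr a 2 * Lr a 1 + 1) ∧
    F a 2 = (Cc a 2)⁻¹ * contN (Lr a) 2 := by
  have hP : (∏ j ∈ Icc 1 (ell a 2 - 1), y j) ≠ 0 := prod_ne_zero_iff.mpr fun j _ => y_ne_zero j
  have base : phi a 1 * phi a 2 + (∏ j ∈ Icc 1 (ell a 2 - 1), y j)
      = (Cc a 2)⁻¹ * (Lr a 2 * Lr a 1 + 1) := by
    rw [Lr, Lr, Cc_one, Cc_two, inv_inv]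
    field_simp
  exact ⟨base, by rw [F_two, contN_two, base]⟩

/-- The base case `n = 2`: `φ_1 φ_2 + ∏_{j=1}^{ℓ_2 − 1} y_j = C_2⁻¹ (𝓛_2 𝓛_1 + 1)`,
that is, `F_2 = C_2⁻¹ ⬝ N[𝓛_1, 𝓛_2]`. -/
theorem F_two_eq_continuant
    (n : ℕ) (hn : 2 ≤ n) (a : ℕ → ℕ)
    (hpos : ∀ i, 1 ≤ i → i ≤ n → 0 < a i) (ha1 : 1 < a 1) :
    phi a 1 * phi a 2 + (∏ j ∈ Finset.Icc 1 (ell a 2 - 1), y j)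
      = (Cc a 2)⁻¹ * (Lr a 2 * Lr a 1 + 1) ∧
    F a 2 = (Cc a 2)⁻¹ * contN (Lr a) 2 :=
  F_two_eq_continuant_general a
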